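/- arXiv:1101.3026 — 2 statements merged into one kernel-verified Lean document; each statement's English description precedes it below -/
import Mathlib

section
/- For every finite set P of prime numbers, the sum of the reciprocals of the elements of S_P converges, i.e. the function n ↦ 1/n (as a real number) is summable over S_P; equivalently, 1 + Σ_{n ∈ S_P} 1/n < ∞. -/
/-- `TowerOver P n` says that the prime tower expansion of `n` is a tower over
the finite set of primes `P`: it is the least predicate such that `n` satisfies
it whenever `n ≥ 2`, every prime factor of `n` lies in `P`, and every exponent
in the prime factorization of `n` that is `≥ 2` itself satisfies it. -/
inductive TowerOver (P : Finset ℕ) : ℕ → Prop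
  | intro (n : ℕ) (hn : 2 ≤ n)
      (hfac : ∀ p : ℕ, p.Prime → p ∣ n → p ∈ P)
      (hexp : ∀ p : ℕ, p.Prime → 2 ≤ n.factorization p →
        TowerOver P (n.factorization p)) :
      TowerOver P n

/-!
Every member of `S_P` has all its prime factors in `P`, and the reciprocals of the
`P`-smooth numbers are summable: their sum is the finite Euler product
`∏_{p ∈ P} (1 - 1/p)⁻¹`.
-/

theorem Nat.summable_inv_factoredNumbers (s : Finset ℕ) :
    Summable (fun m : Nat.factoredNumbers s => ((m : ℕ) : ℝ)⁻¹) := by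
  let f : ℕ →* ℝ := invMonoidHom.comp (Nat.castRingHom ℝ : ℕ →* ℝ)
  have hf : ∀ {p : ℕ}, p.Prime → ‖f p‖ < 1 := fun {p} hp => by
    simpa [f] using inv_lt_one_of_one_lt₀ (by exact_mod_cast hp.one_lt : (1 : ℝ) < p)
  simpa [f] using
    (EulerProduct.summable_and_hasSum_factoredNumbers_prod_filter_prime_geometric hf s).1

theorem TowerOver.mem_factoredNumbers {P : Finset ℕ} {n : ℕ} (h : TowerOver P n) :
    n ∈ Nat.factoredNumbers P := by
  obtain ⟨n, -, hfac, -⟩ := h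
  exact Nat.mem_factoredNumbers'.mpr hfac

theorem summable_inv_towerOver_general (P : Finset ℕ) :
    Summable (fun n : {n : ℕ | TowerOver P n} => (1 : ℝ) / (n : ℕ)) := by
  have hsub : {n | TowerOver P n} ⊆ Nat.factoredNumbers P := fun _ h => h.mem_factoredNumbers
  exact ((Nat.summable_inv_factoredNumbers P).comp_injective (Set.inclusion_injective hsub)).congr
    fun _ => (one_div _).symm

/-- For every finite set `P` of primes, the sum of the reciprocals of the
integers whose prime tower expansion is a tower over `P` converges. -/
theorem summable_inv_towerOver (P : Finset ℕ) (hP : ∀ p ∈ P, Nat.Prime p) :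
    Summable (fun n : {n : ℕ | TowerOver P n} => (1 : ℝ) / (n : ℕ)) :=
  summable_inv_towerOver_general P
end

section
/- For every finite set P of prime numbers, Σ_{n ∈ S_P} 1/n ≤ ∏_{p ∈ P} (1 - p^{-1})^{-1}, where the sum and product are over real numbers. -/
/-- The completely multiplicative function `n ↦ (n : ℝ)⁻¹`. -/
noncomputable def invHom : ℕ →* ℝ where
  toFun n := (n : ℝ)⁻¹
  map_one' := by simp
  map_mul' m n := by push_cast; exact mul_inv ..

set_option maxHeartbeats 1000000 in
/-- For every finite set `P` of primes, the sum of the reciprocals of the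
integers whose prime tower expansion is a tower over `P` is bounded by the
Euler product `∏_{p ∈ P} (1 - p⁻¹)⁻¹`. -/
theorem tsum_inv_towerOver_le (P : Finset ℕ) (hP : ∀ p ∈ P, Nat.Prime p) :
    ∑' n : {n : ℕ | TowerOver P n}, (1 : ℝ) / (n : ℕ) ≤
      ∏ p ∈ P, (1 - (p : ℝ)⁻¹)⁻¹ := by
  have hlt : ∀ {p : ℕ}, p.Prime → ‖invHom p‖ < 1 := by
    intro p hp
    have h1 : (1 : ℝ) < p := by exact_mod_cast hp.one_lt
    simp only [invHom, MonoidHom.coe_mk, OneHom.coe_mk]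
    rw [Real.norm_eq_abs, abs_of_nonneg (by positivity)]
    rw [inv_lt_one_iff₀]; right; exact h1
  obtain ⟨hsummable, hhs⟩ :=
    EulerProduct.summable_and_hasSum_factoredNumbers_prod_filter_prime_geometric
      (f := invHom) hlt P
  have hfilter : (P.filter Nat.Prime) = P := Finset.filter_true_of_mem hP
  have hsub : {n : ℕ | TowerOver P n} ⊆ Nat.factoredNumbers P := by
    intro n hn
    obtain ⟨n, hn2, hfac, -⟩ := hn
    rw [Nat.mem_factoredNumbers]
    refine ⟨by omega, fun p hp ↦ ?_⟩
    exact hfac p (Nat.prime_of_mem_primeFactorsList hp)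
      (Nat.dvd_of_mem_primeFactorsList hp)
  have hgsum : Summable (fun m : Nat.factoredNumbers P ↦ invHom m) := hhs.summable
  have hnonneg : ∀ n : ℕ, 0 ≤ invHom n := fun n ↦ by
    simp only [invHom, MonoidHom.coe_mk, OneHom.coe_mk]; positivity
  have hgsum' : Summable ((Nat.factoredNumbers P).indicator (fun n : ℕ ↦ invHom n)) := by
    rwa [← summable_subtype_iff_indicator]
  have hmono : {n : ℕ | TowerOver P n}.indicator (fun n : ℕ ↦ invHom n) ≤
      (Nat.factoredNumbers P).indicator (fun n : ℕ ↦ invHom n) :=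
    Set.indicator_le_indicator_of_subset hsub (fun n ↦ hnonneg n)
  have hfsum' : Summable ({n : ℕ | TowerOver P n}.indicator (fun n : ℕ ↦ invHom n)) :=
    hgsum'.of_nonneg_of_le (fun n ↦ Set.indicator_nonneg (fun a _ ↦ hnonneg a) n)
      (fun n ↦ hmono n)
  have hle : ∑' n : {n : ℕ | TowerOver P n}, invHom n ≤
      ∑' m : Nat.factoredNumbers P, invHom m := by
    rw [tsum_subtype, tsum_subtype]
    exact Summable.tsum_le_tsum (fun n ↦ hmono n) hfsum' hgsum'
  calc ∑' n : {n : ℕ | TowerOver P n}, (1 : ℝ) / (n : ℕ)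
      = ∑' n : {n : ℕ | TowerOver P n}, invHom n := by
        refine tsum_congr fun n ↦ ?_
        simp [invHom, one_div]
    _ ≤ ∑' m : Nat.factoredNumbers P, invHom m := hle
    _ = ∏ p ∈ P, (1 - (p : ℝ)⁻¹)⁻¹ := by
        rw [hhs.tsum_eq, hfilter]
        refine Finset.prod_congr rfl fun p _ ↦ ?_
        simp [invHom]
end
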